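/- For every real ν and every smooth function f : ℂ → ℂ, the intertwining relation (L_κ^ν (∇_{ν+κ} f))(z) = (∇_{ν+κ}(L_κ^{ν+κ} f))(z) + (2ν+κ)(∇_{ν+κ} f)(z) holds at every z ∈ ℂ with 1 + κ|z|² > 0. -/

import Mathlib

/-! Both sides are differential expressions in `f` with polynomial coefficients in `z` and `z̄`.
Expanding `∂∂̄(∇f)`, `∂(∇f)`, `∂̄(∇f)` and `∂(L f)` by the Leibniz rule turns the identity into a
polynomial identity in `z`, `z̄` and the Wirtinger derivatives of `f` up to order three; the only
analytic input is `∂∂̄ = ∂̄∂` on `C²` functions, i.e. the symmetry of the second derivative. -/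

open Complex MeasureTheory Filter

/-- Wirtinger derivative ∂f/∂z = (1/2)(∂f/∂x − i ∂f/∂y). -/
noncomputable def wderiv (f : ℂ → ℂ) (z : ℂ) : ℂ :=
  (fderiv ℝ f z 1 - Complex.I * fderiv ℝ f z Complex.I) / 2

/-- Anti-holomorphic Wirtinger derivative ∂f/∂z̄ = (1/2)(∂f/∂x + i ∂f/∂y). -/
noncomputable def wderivBar (f : ℂ → ℂ) (z : ℂ) : ℂ :=
  (fderiv ℝ f z 1 + Complex.I * fderiv ℝ f z Complex.I) / 2

/-- Twisted Laplacian L_κ^ν. -/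
noncomputable def twistedLap (κ ν : ℝ) (f : ℂ → ℂ) (z : ℂ) : ℂ :=
  -(((1 + κ * Complex.normSq z : ℝ) : ℂ) ^ 2 * wderiv (wderivBar f) z
    + (ν : ℂ) * ((1 + κ * Complex.normSq z : ℝ) : ℂ) *
        (z * wderiv f z - (starRingEnd ℂ) z * wderivBar f z)
    - (ν : ℂ) ^ 2 * ((Complex.normSq z : ℝ) : ℂ) * f z)

/-- (∇_α f)(z) = −(1+κ|z|²) ∂f/∂z + α z̄ f(z). -/
noncomputable def nabla (κ α : ℝ) (f : ℂ → ℂ) (z : ℂ) : ℂ :=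
  -((1 + κ * Complex.normSq z : ℝ) : ℂ) * wderiv f z + (α : ℂ) * (starRingEnd ℂ) z * f z

/-- (∇*_α f)(z) = (1+κ|z|²) ∂f/∂z̄ + (α−κ) z f(z). -/
noncomputable def nablaStar (κ α : ℝ) (f : ℂ → ℂ) (z : ℂ) : ℂ :=
  ((1 + κ * Complex.normSq z : ℝ) : ℂ) * wderivBar f z + ((α - κ : ℝ) : ℂ) * z * f z

/-- ∇_{ν+κ} ∘ ∇_{ν+2κ} ∘ ⋯ ∘ ∇_{ν+mκ} (the identity when m = 0). -/
noncomputable def nablaChain (κ : ℝ) : ℕ → ℝ → (ℂ → ℂ) → (ℂ → ℂ)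
  | 0, _, f => f
  | m + 1, ν, f => nabla κ (ν + κ) (nablaChain κ m (ν + κ) f)

/-- (D g)(z) = (1+κ|z|²)² ∂g/∂z. -/
noncomputable def Dop (κ : ℝ) (g : ℂ → ℂ) (z : ℂ) : ℂ :=
  ((1 + κ * Complex.normSq z : ℝ) : ℂ) ^ 2 * wderiv g z

/-- Generalized binomial coefficient C(r,k) for real r. -/
noncomputable def genBinom (r : ℝ) (k : ℕ) : ℝ :=
  (∏ i ∈ Finset.range k, (r - i)) / (Nat.factorial k)

/-- Jacobi polynomial P_j^{(a,b)}(x) with real parameters a, b. -/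
noncomputable def jacobiP (a b : ℝ) (j : ℕ) (x : ℝ) : ℝ :=
  ∑ s ∈ Finset.range (j + 1),
    genBinom ((j : ℝ) + a) (j - s) * genBinom ((j : ℝ) + b) s *
      ((x - 1) / 2) ^ s * ((x + 1) / 2) ^ (j - s)

/-- Pochhammer symbol (a)_n = a(a+1)⋯(a+n−1). -/
noncomputable def risingFactorial (a : ℝ) (n : ℕ) : ℝ :=
  ∏ i ∈ Finset.range n, (a + i)

open ComplexConjugate

section Wirtinger

variable {f g : ℂ → ℂ} {z : ℂ}

lemma wderiv_add (hf : DifferentiableAt ℝ f z) (hg : DifferentiableAt ℝ g z) :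
    wderiv (fun w => f w + g w) z = wderiv f z + wderiv g z := by
  simp [wderiv, fderiv_fun_add hf hg]; ring

lemma wderivBar_add (hf : DifferentiableAt ℝ f z) (hg : DifferentiableAt ℝ g z) :
    wderivBar (fun w => f w + g w) z = wderivBar f z + wderivBar g z := by
  simp [wderivBar, fderiv_fun_add hf hg]; ring

lemma wderiv_sub (hf : DifferentiableAt ℝ f z) (hg : DifferentiableAt ℝ g z) :
    wderiv (fun w => f w - g w) z = wderiv f z - wderiv g z := by
  simp [wderiv, fderiv_fun_sub hf hg]; ring

lemma wderivBar_sub (hf : DifferentiableAt ℝ f z) (hg : DifferentiableAt ℝ g z) :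
    wderivBar (fun w => f w - g w) z = wderivBar f z - wderivBar g z := by
  simp [wderivBar, fderiv_fun_sub hf hg]; ring

lemma wderiv_neg : wderiv (fun w => -f w) z = -wderiv f z := by
  simp [wderiv, fderiv_fun_neg]; ring

lemma wderivBar_neg : wderivBar (fun w => -f w) z = -wderivBar f z := by
  simp [wderivBar, fderiv_fun_neg]; ring

lemma wderiv_mul (hf : DifferentiableAt ℝ f z) (hg : DifferentiableAt ℝ g z) :
    wderiv (fun w => f w * g w) z = wderiv f z * g z + f z * wderiv g z := by
  simp [wderiv, fderiv_fun_mul hf hg]; ring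

lemma wderivBar_mul (hf : DifferentiableAt ℝ f z) (hg : DifferentiableAt ℝ g z) :
    wderivBar (fun w => f w * g w) z = wderivBar f z * g z + f z * wderivBar g z := by
  simp [wderivBar, fderiv_fun_mul hf hg]; ring

lemma wderiv_const (c : ℂ) : wderiv (fun _ => c) z = 0 := by
  simp [wderiv]

lemma wderivBar_const (c : ℂ) : wderivBar (fun _ => c) z = 0 := by
  simp [wderivBar]

lemma wderiv_id : wderiv (fun w => w) z = 1 := by
  simp [wderiv]

lemma wderivBar_id : wderivBar (fun w => w) z = 0 := by
  simp [wderivBar]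

lemma fderiv_conj : fderiv ℝ (fun w => conj w) z = conjCLE.toContinuousLinearMap :=
  conjCLE.fderiv

lemma wderiv_conj : wderiv (fun w => conj w) z = 0 := by
  simp [wderiv, fderiv_conj]

lemma wderivBar_conj : wderivBar (fun w => conj w) z = 1 := by
  simp [wderivBar, fderiv_conj]

end Wirtinger

section SecondDerivatives

variable {f : ℂ → ℂ}

lemma ContDiff.wderiv {n : WithTop ℕ∞} (hf : ContDiff ℝ (n + 1) f) :
    ContDiff ℝ n (wderiv f) := by
  have h := hf.fderiv_right le_rfl
  exact ((h.clm_apply contDiff_const).sub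
    (contDiff_const.mul (h.clm_apply contDiff_const))).div_const 2

lemma ContDiff.wderivBar {n : WithTop ℕ∞} (hf : ContDiff ℝ (n + 1) f) :
    ContDiff ℝ n (wderivBar f) := by
  have h := hf.fderiv_right le_rfl
  exact ((h.clm_apply contDiff_const).add
    (contDiff_const.mul (h.clm_apply contDiff_const))).div_const 2

lemma wderiv_fderiv_apply {z : ℂ} (hd : DifferentiableAt ℝ (fderiv ℝ f) z) (v : ℂ) :
    wderiv (fun w => fderiv ℝ f w v) z
      = (fderiv ℝ (fderiv ℝ f) z 1 v - I * fderiv ℝ (fderiv ℝ f) z I v) / 2 := by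
  simp [wderiv, fderiv_clm_apply hd (differentiableAt_const v)]

lemma wderivBar_fderiv_apply {z : ℂ} (hd : DifferentiableAt ℝ (fderiv ℝ f) z) (v : ℂ) :
    wderivBar (fun w => fderiv ℝ f w v) z
      = (fderiv ℝ (fderiv ℝ f) z 1 v + I * fderiv ℝ (fderiv ℝ f) z I v) / 2 := by
  simp [wderivBar, fderiv_clm_apply hd (differentiableAt_const v)]

lemma wderiv_wderivBar_comm (hf : ContDiff ℝ 2 f) (z : ℂ) :
    wderiv (wderivBar f) z = wderivBar (wderiv f) z := by
  have hsymm : IsSymmSndFDerivAt ℝ f z := hf.contDiffAt.isSymmSndFDerivAt (by simp)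
  have hd : DifferentiableAt ℝ (fderiv ℝ f) z :=
    (hf.fderiv_right (m := 1) le_rfl).differentiable one_ne_zero z
  have happly : ∀ v, DifferentiableAt ℝ (fun w => fderiv ℝ f w v) z :=
    fun v => hd.clm_apply (differentiableAt_const v)
  have hbar : wderivBar f = fun w => (2 : ℂ)⁻¹ * (fderiv ℝ f w 1 + I * fderiv ℝ f w I) := by
    funext w; exact div_eq_inv_mul ..
  have hw : wderiv f = fun w => (2 : ℂ)⁻¹ * (fderiv ℝ f w 1 - I * fderiv ℝ f w I) := by
    funext w; exact div_eq_inv_mul ..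
  rw [hbar, hw]
  simp (disch := fun_prop) only [wderiv_mul, wderiv_add, wderiv_const, wderivBar_mul,
    wderivBar_sub, wderivBar_const, wderiv_fderiv_apply hd, wderivBar_fderiv_apply hd]
  linear_combination (I / 2) * hsymm 1 I

end SecondDerivatives

lemma ofReal_one_add_mul_normSq (κ : ℝ) (w : ℂ) :
    ((1 + κ * normSq w : ℝ) : ℂ) = 1 + κ * (w * conj w) := by
  push_cast; rw [mul_conj]

section Operators

variable (κ α : ℝ) {f : ℂ → ℂ}

lemma nabla_eq :
    nabla κ α f = fun w => -((1 + κ * (w * conj w)) * wderiv f w) + α * conj w * f w := by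
  funext w; simp only [nabla, ofReal_one_add_mul_normSq]; ring

lemma twistedLap_eq :
    twistedLap κ α f = fun w =>
      -((1 + κ * (w * conj w)) * ((1 + κ * (w * conj w)) * wderiv (wderivBar f) w)
        + α * ((1 + κ * (w * conj w)) * (w * wderiv f w - conj w * wderivBar f w))
        - α * (α * (w * (conj w * f w)))) := by
  funext w; simp only [twistedLap, ofReal_one_add_mul_normSq, ← mul_conj]; ring

lemma wderiv_nabla (hf : ContDiff ℝ 2 f) (z : ℂ) :
    wderiv (nabla κ α f) z
      = (α - κ) * conj z * wderiv f z - (1 + κ * (z * conj z)) * wderiv (wderiv f) z := by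
  have hf₀ : Differentiable ℝ f := hf.differentiable two_ne_zero
  have hf₁ : Differentiable ℝ (wderiv f) := (hf.wderiv (n := 1)).differentiable one_ne_zero
  rw [nabla_eq]
  simp (disch := fun_prop) only [wderiv_add, wderiv_mul, wderiv_neg, wderiv_const, wderiv_id,
    wderiv_conj]
  ring

lemma wderivBar_nabla (hf : ContDiff ℝ 2 f) :
    wderivBar (nabla κ α f) = fun w =>
      -(κ * (w * wderiv f w)) - (1 + κ * (w * conj w)) * wderiv (wderivBar f) w
        + α * f w + α * conj w * wderivBar f w := by
  have hf₀ : Differentiable ℝ f := hf.differentiable two_ne_zero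
  have hf₁ : Differentiable ℝ (wderiv f) := (hf.wderiv (n := 1)).differentiable one_ne_zero
  funext w
  rw [nabla_eq]
  simp (disch := fun_prop) only [wderivBar_add, wderivBar_mul, wderivBar_neg, wderivBar_const,
    wderivBar_id, wderivBar_conj, ← wderiv_wderivBar_comm hf]
  ring

lemma wderiv_wderivBar_nabla (hf : ContDiff ℝ 3 f) (z : ℂ) :
    wderiv (wderivBar (nabla κ α f)) z
      = (α - κ) * wderiv f z - κ * z * wderiv (wderiv f) z
        + (α - κ) * conj z * wderiv (wderivBar f) z
        - (1 + κ * (z * conj z)) * wderiv (wderiv (wderivBar f)) z := by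
  have hf₀ : Differentiable ℝ f := hf.differentiable three_ne_zero
  have hf₁ : Differentiable ℝ (wderiv f) := (hf.wderiv (n := 2)).differentiable two_ne_zero
  have hf₂ : Differentiable ℝ (wderivBar f) := (hf.wderivBar (n := 2)).differentiable two_ne_zero
  have hf₃ : Differentiable ℝ (wderiv (wderivBar f)) :=
    ((hf.wderivBar (n := 2)).wderiv (n := 1)).differentiable one_ne_zero
  rw [wderivBar_nabla κ α (hf.of_le (by norm_num))]
  simp (disch := fun_prop) only [wderiv_add, wderiv_sub, wderiv_mul, wderiv_neg, wderiv_const,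
    wderiv_id, wderiv_conj]
  ring

lemma wderiv_twistedLap (hf : ContDiff ℝ 3 f) (z : ℂ) :
    wderiv (twistedLap κ α f) z
      = -(2 * κ * conj z * (1 + κ * (z * conj z)) * wderiv (wderivBar f) z
        + (1 + κ * (z * conj z)) ^ 2 * wderiv (wderiv (wderivBar f)) z
        + α * κ * conj z * (z * wderiv f z - conj z * wderivBar f z)
        + α * (1 + κ * (z * conj z))
            * (wderiv f z + z * wderiv (wderiv f) z - conj z * wderiv (wderivBar f) z)
        - α ^ 2 * conj z * f z - α ^ 2 * z * conj z * wderiv f z) := by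
  have hf₀ : Differentiable ℝ f := hf.differentiable three_ne_zero
  have hf₁ : Differentiable ℝ (wderiv f) := (hf.wderiv (n := 2)).differentiable two_ne_zero
  have hf₂ : Differentiable ℝ (wderivBar f) := (hf.wderivBar (n := 2)).differentiable two_ne_zero
  have hf₃ : Differentiable ℝ (wderiv (wderivBar f)) :=
    ((hf.wderivBar (n := 2)).wderiv (n := 1)).differentiable one_ne_zero
  rw [twistedLap_eq]
  simp (disch := fun_prop) only [wderiv_add, wderiv_sub, wderiv_mul, wderiv_neg, wderiv_const,
    wderiv_id, wderiv_conj]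
  ring

end Operators

theorem stmt2_general (κ ν : ℝ) (f : ℂ → ℂ) (hf : ContDiff ℝ (⊤ : ℕ∞) f)
    (z : ℂ) :
    twistedLap κ ν (nabla κ (ν + κ) f) z
      = nabla κ (ν + κ) (twistedLap κ (ν + κ) f) z
        + ((2 * ν + κ : ℝ) : ℂ) * nabla κ (ν + κ) f z := by
  have hf₃ : ContDiff ℝ 3 f := hf.of_le (WithTop.coe_le_coe.mpr le_top)
  simp only [twistedLap, nabla]
  rw [wderiv_wderivBar_nabla _ _ hf₃, wderiv_nabla _ _ (hf₃.of_le (by norm_num)),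
    wderivBar_nabla _ _ (hf₃.of_le (by norm_num)), wderiv_twistedLap _ _ hf₃,
    ofReal_one_add_mul_normSq, ← mul_conj]
  push_cast
  ring

theorem stmt2 (κ ν : ℝ) (f : ℂ → ℂ) (hf : ContDiff ℝ (⊤ : ℕ∞) f)
    (z : ℂ) (hz : 0 < 1 + κ * Complex.normSq z) :
    twistedLap κ ν (nabla κ (ν + κ) f) z
      = nabla κ (ν + κ) (twistedLap κ (ν + κ) f) z
        + ((2 * ν + κ : ℝ) : ℂ) * nabla κ (ν + κ) f z :=
  stmt2_general κ ν f hf z
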